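/- arXiv:2201.04901 — 8 statements merged into one kernel-verified Lean document; each statement's English description precedes it below -/
import Mathlib

section
/- Let G be a graph with n vertices and adjacency eigenvalues λ_1 ≥ ... ≥ λ_n. Then the independence number α(G) satisfies α(G) ≤ min{ |{i : λ_i ≥ 0}|, |{i : λ_i ≤ 0}| }. -/
open Matrix Polynomial

/-- The independence number of a graph: the maximum cardinality of a set of
pairwise non-adjacent vertices. -/
noncomputable def indepNum {V : Type*} [Fintype V] (G : SimpleGraph V) : ℕ :=
  sSup {r | ∃ s : Finset V, s.card = r ∧ ∀ u ∈ s, ∀ v ∈ s, u ≠ v → ¬ G.Adj u v}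

/-!
In an orthonormal eigenbasis the quadratic form of a Hermitian matrix is `⟪x, A x⟫ = ∑ λ_i |x_i|²`,
which is negative definite on the span of the eigenvectors with `λ_i < 0`. A subspace `U` on which
the form is nonnegative therefore meets that span trivially: the coordinates along the eigenvectors
with `λ_i ≥ 0` are injective on `U`, so `dim U ≤ #{i | λ_i ≥ 0}`. The coordinate vectors of an
independent set `S` span a subspace of dimension `|S|` on which the form of the adjacency matrix
vanishes, so this bound applies to both `A` and `-A`.
-/

open scoped InnerProductSpace
open Finset

theorem Finset.card_filter_eq_of_map_univ_eq {α ι κ : Type*} [Fintype ι] [Fintype κ]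
    {f : ι → α} {g : κ → α} (h : Multiset.map f univ.val = Multiset.map g univ.val)
    (p : α → Prop) [DecidablePred p] : #{i | p (f i)} = #{j | p (g j)} := by
  have hcount := congrArg (Multiset.countP p) h
  rwa [Multiset.countP_map, Multiset.countP_map] at hcount

namespace OrthonormalBasis

variable {𝕜 E ι : Type*} [RCLike 𝕜] [NormedAddCommGroup E] [InnerProductSpace 𝕜 E] [Fintype ι]
  {T : E →ₗ[𝕜] E} {b : OrthonormalBasis ι 𝕜 E} {μ : ι → ℝ}

theorem repr_apply_eq_mul_of_apply_eq_smul (hb : ∀ i, T (b i) = (μ i : 𝕜) • b i)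
    (x : E) (i : ι) : b.repr (T x) i = μ i * b.repr x i := by
  classical
  conv_lhs => rw [← b.sum_repr x]
  simp [map_sum, hb, Pi.single_apply, smul_smul, mul_comm]

theorem re_inner_apply_self_eq_sum (hb : ∀ i, T (b i) = (μ i : 𝕜) • b i) (x : E) :
    RCLike.re ⟪x, T x⟫_𝕜 = ∑ i, μ i * ‖b.repr x i‖ ^ 2 := by
  rw [← b.sum_inner_mul_inner, map_sum]
  refine sum_congr rfl fun i _ => ?_
  rw [← b.repr_apply_apply, b.repr_apply_eq_mul_of_apply_eq_smul hb, ← inner_conj_symm,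
    ← b.repr_apply_apply, mul_left_comm, RCLike.conj_mul, ← RCLike.ofReal_pow,
    ← RCLike.ofReal_mul, RCLike.ofReal_re]

theorem eq_zero_of_re_inner_nonneg_of_repr_eq_zero (hb : ∀ i, T (b i) = (μ i : 𝕜) • b i)
    {x : E} (hx : 0 ≤ RCLike.re ⟪x, T x⟫_𝕜) (hrepr : ∀ i, 0 ≤ μ i → b.repr x i = 0) :
    x = 0 := by
  rw [b.re_inner_apply_self_eq_sum hb] at hx
  have hterm : ∀ i, μ i * ‖b.repr x i‖ ^ 2 ≤ 0 := fun i => by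
    rcases le_or_gt 0 (μ i) with hi | hi
    · simp [hrepr i hi]
    · exact mul_nonpos_of_nonpos_of_nonneg hi.le (sq_nonneg _)
  have hzero := (sum_eq_zero_iff_of_nonpos fun i _ => hterm i).mp
    (le_antisymm (sum_nonpos fun i _ => hterm i) hx)
  refine b.repr.map_eq_zero_iff.mp (PiLp.ext fun i => ?_)
  rcases le_or_gt 0 (μ i) with hi | hi
  · exact hrepr i hi
  · simpa [hi.ne] using hzero i (mem_univ i)

theorem finrank_le_card_nonneg_of_re_inner_nonneg (hb : ∀ i, T (b i) = (μ i : 𝕜) • b i)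
    (U : Submodule 𝕜 E) (hU : ∀ x ∈ U, 0 ≤ RCLike.re ⟪x, T x⟫_𝕜) :
    Module.finrank 𝕜 U ≤ #{i | 0 ≤ μ i} := by
  let restrict : U →ₗ[𝕜] ({i // 0 ≤ μ i} → 𝕜) := LinearMap.pi fun i =>
    (EuclideanSpace.proj (i : ι) : EuclideanSpace 𝕜 ι →L[𝕜] 𝕜).toLinearMap ∘ₗ
      b.repr.toLinearMap ∘ₗ U.subtype
  have hinj : Function.Injective restrict := by
    refine (injective_iff_map_eq_zero restrict).mpr fun x hx => Subtype.ext ?_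
    exact b.eq_zero_of_re_inner_nonneg_of_repr_eq_zero hb (hU x x.2)
      fun i hi => congrFun hx ⟨i, hi⟩
  simpa [Fintype.card_subtype] using LinearMap.finrank_le_finrank_of_injective hinj

theorem finrank_le_card_nonpos_of_re_inner_nonpos (hb : ∀ i, T (b i) = (μ i : 𝕜) • b i)
    (U : Submodule 𝕜 E) (hU : ∀ x ∈ U, RCLike.re ⟪x, T x⟫_𝕜 ≤ 0) :
    Module.finrank 𝕜 U ≤ #{i | μ i ≤ 0} := by
  have hb' : ∀ i, (-T) (b i) = ((-μ i : ℝ) : 𝕜) • b i := fun i => by simp [hb]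
  simpa using b.finrank_le_card_nonneg_of_re_inner_nonneg hb' U fun x hx => by simpa using hU x hx

end OrthonormalBasis

section Matrix

variable {𝕜 n : Type*} [RCLike 𝕜] [Fintype n] [DecidableEq n]

theorem Matrix.IsHermitian.toEuclideanLin_eigenvectorBasis {A : Matrix n n 𝕜}
    (hA : A.IsHermitian) (j : n) :
    A.toEuclideanLin (hA.eigenvectorBasis j) = (hA.eigenvalues j : 𝕜) • hA.eigenvectorBasis j := by
  ext1
  rw [toLpLin_apply, WithLp.ofLp_toLp, hA.mulVec_eigenvectorBasis,
    RCLike.real_smul_eq_coe_smul (K := 𝕜), WithLp.ofLp_smul]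

theorem EuclideanSpace.finrank_span_single (s : Finset n) :
    Module.finrank 𝕜
      (Submodule.span 𝕜 (Set.range fun v : s => EuclideanSpace.single (v : n) (1 : 𝕜))) = #s := by
  have h := (EuclideanSpace.basisFun n 𝕜).toBasis.linearIndependent.comp ((↑) : s → n)
    Subtype.val_injective
  rw [finrank_span_eq_card (by simpa [Function.comp_def] using h), Fintype.card_coe]

theorem Matrix.inner_toEuclideanLin_self_eq_zero_of_mem_span_single {A : Matrix n n 𝕜}
    {s : Finset n} (hA : ∀ u ∈ s, ∀ v ∈ s, A u v = 0) {x : EuclideanSpace 𝕜 n}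
    (hx : x ∈ Submodule.span 𝕜 (Set.range fun v : s => EuclideanSpace.single (v : n) (1 : 𝕜))) :
    ⟪x, A.toEuclideanLin x⟫_𝕜 = 0 := by
  obtain ⟨c, rfl⟩ := (Submodule.mem_span_range_iff_exists_fun 𝕜).mp hx
  simp [map_sum, sum_inner, inner_sum, inner_smul_left, inner_smul_right,
    EuclideanSpace.inner_single_left, toLpLin_apply, hA]

end Matrix

theorem SimpleGraph.IsIndepSet.card_le_min_card_eigenvalues {V : Type*} [Fintype V]
    [DecidableEq V] {G : SimpleGraph V} [DecidableRel G.Adj] {s : Finset V}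
    (hs : G.IsIndepSet s) :
    #s ≤ min #{i | 0 ≤ (G.isHermitian_adjMatrix ℝ).eigenvalues i}
      #{i | (G.isHermitian_adjMatrix ℝ).eigenvalues i ≤ 0} := by
  set hA := G.isHermitian_adjMatrix ℝ
  set U := Submodule.span ℝ (Set.range fun v : s => EuclideanSpace.single (v : V) (1 : ℝ))
  have hAs : ∀ u ∈ s, ∀ v ∈ s, G.adjMatrix ℝ u v = 0 := fun u hu v hv => by
    rcases eq_or_ne u v with rfl | huv
    · simp
    · simp [hs hu hv huv]
  have hU : ∀ x ∈ U, RCLike.re ⟪x, (G.adjMatrix ℝ).toEuclideanLin x⟫_ℝ = 0 := fun x hx => by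
    rw [inner_toEuclideanLin_self_eq_zero_of_mem_span_single hAs hx, map_zero]
  rw [← EuclideanSpace.finrank_span_single (𝕜 := ℝ) s]
  exact le_min
    (hA.eigenvectorBasis.finrank_le_card_nonneg_of_re_inner_nonneg
      hA.toEuclideanLin_eigenvectorBasis U fun x hx => (hU x hx).ge)
    (hA.eigenvectorBasis.finrank_le_card_nonpos_of_re_inner_nonpos
      hA.toEuclideanLin_eigenvectorBasis U fun x hx => (hU x hx).le)

theorem stmt0_general {V : Type*} [Fintype V] [DecidableEq V] (G : SimpleGraph V)
    [DecidableRel G.Adj] (n : ℕ)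
    (lam : Fin n → ℝ)
    (hroots : (G.adjMatrix ℝ).charpoly.roots = Multiset.map lam Finset.univ.val) :
    indepNum G ≤ min {i : Fin n | 0 ≤ lam i}.ncard {i : Fin n | lam i ≤ 0}.ncard := by
  have hA := G.isHermitian_adjMatrix ℝ
  have hspec : Multiset.map lam univ.val = Multiset.map hA.eigenvalues univ.val := by
    rw [← hroots, hA.roots_charpoly_eq_eigenvalues]
    simp
  simp only [Set.ncard_eq_toFinset_card', Set.toFinset_ofPred]
  rw [card_filter_eq_of_map_univ_eq hspec (0 ≤ ·), card_filter_eq_of_map_univ_eq hspec (· ≤ 0)]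
  refine csSup_le ⟨0, ∅, by simp, by simp⟩ ?_
  rintro _ ⟨s, rfl, hs⟩
  exact SimpleGraph.IsIndepSet.card_le_min_card_eigenvalues hs

/-- **Cvetković's inertia bound.** If `lam : Fin n → ℝ` enumerates the adjacency
eigenvalues of `G` in decreasing order (with multiplicity), then
`α(G) ≤ min{ #{i : λ_i ≥ 0}, #{i : λ_i ≤ 0} }`. -/
theorem stmt0 {V : Type*} [Fintype V] [DecidableEq V] (G : SimpleGraph V)
    [DecidableRel G.Adj] (n : ℕ) (hn : n = Fintype.card V)
    (lam : Fin n → ℝ) (hsort : Antitone lam)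
    (hroots : (G.adjMatrix ℝ).charpoly.roots = Multiset.map lam Finset.univ.val) :
    indepNum G ≤ min {i : Fin n | 0 ≤ lam i}.ncard {i : Fin n | lam i ≤ 0}.ncard :=
  stmt0_general G n lam hroots
end

section
/- Let G be a connected d-regular graph on n vertices with adjacency eigenvalues λ_1 = d ≥ λ_2 ≥ ... ≥ λ_n, with λ_n < 0. Then the independence number satisfies α(G) ≤ n / (1 - λ_1/λ_n). -/
open Matrix Polynomial

/-!
Let `S` be an independent set of size `α` in a `d`-regular graph on `N` vertices with adjacency
matrix `A` and least eigenvalue `c`. Test the Rayleigh bound `c ‖x‖² ≤ xᵀ A x` on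
`x = N 𝟙_S - α 𝟙`, which is orthogonal to the Perron vector `𝟙`: independence gives
`𝟙_Sᵀ A 𝟙_S = 0` and regularity gives `A 𝟙 = d 𝟙`, so the inequality reads
`c N α (N - α) ≤ -d N α²`, i.e. `α (d - c) ≤ -c N`.
-/

theorem Matrix.IsHermitian.smul_dotProduct_self_le {n : Type*} [Fintype n] [DecidableEq n]
    {A : Matrix n n ℝ} (hA : A.IsHermitian) {c : ℝ} (hc : ∀ μ ∈ spectrum ℝ A, c ≤ μ)
    (x : n → ℝ) : c * (x ⬝ᵥ x) ≤ x ⬝ᵥ A *ᵥ x := by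
  have hpsd : (A - algebraMap ℝ _ c).PosSemidef := by
    refine posSemidef_iff_isHermitian_and_spectrum_nonneg.2 ⟨hA.sub ?_, ?_⟩
    · simpa only [algebraMap_eq_diagonal] using isHermitian_diagonal _
    · rw [← spectrum.sub_singleton_eq]
      rintro _ ⟨μ, hμ, c, rfl, rfl⟩
      exact sub_nonneg.2 (hc μ hμ)
  have := hpsd.dotProduct_mulVec_nonneg x
  simp only [star_trivial, Algebra.algebraMap_eq_smul_one, sub_mulVec, smul_mulVec, one_mulVec,
    dotProduct_sub, dotProduct_smul, smul_eq_mul] at this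
  linarith

theorem Matrix.spectrum_subset_range_of_roots_charpoly_eq {n ι : Type*} [Fintype n]
    [DecidableEq n] [Fintype ι] {A : Matrix n n ℝ} {lam : ι → ℝ}
    (hroots : A.charpoly.roots = Multiset.map lam Finset.univ.val) :
    spectrum ℝ A ⊆ Set.range lam := by
  intro μ hμ
  have hroot : μ ∈ A.charpoly.roots :=
    mem_roots'.2 ⟨A.charpoly_monic.ne_zero, mem_spectrum_iff_isRoot_charpoly.1 hμ⟩
  obtain ⟨i, -, hi⟩ := Multiset.mem_map.1 (hroots ▸ hroot)
  exact ⟨i, hi⟩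

theorem exists_card_eq_indepNum {V : Type*} [Fintype V] (G : SimpleGraph V) :
    ∃ s : Finset V, s.card = indepNum G ∧ G.IsIndepSet s := by
  obtain ⟨s, hs, hind⟩ : indepNum G ∈
      {r | ∃ s : Finset V, s.card = r ∧ ∀ u ∈ s, ∀ v ∈ s, u ≠ v → ¬ G.Adj u v} :=
    Nat.sSup_mem ⟨0, ∅, by simp⟩ ⟨Fintype.card V, fun _ ⟨s, hs, _⟩ ↦ hs ▸ s.card_le_univ⟩
  exact ⟨s, hs, fun u hu v hv ↦ hind u hu v hv⟩

namespace SimpleGraph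

variable {V : Type*} [Fintype V] [DecidableEq V] {G : SimpleGraph V} [DecidableRel G.Adj]
  {s : Finset V}

theorem IsIndepSet.indicator_dotProduct_adjMatrix_mulVec (hs : G.IsIndepSet s) :
    (fun v ↦ if v ∈ s then (1 : ℝ) else 0) ⬝ᵥ G.adjMatrix ℝ *ᵥ (fun v ↦ if v ∈ s then 1 else 0)
      = 0 := by
  rw [dotProduct_mulVec_adjMatrix]
  refine Finset.sum_eq_zero fun u _ ↦ Finset.sum_eq_zero fun v _ ↦ ?_
  by_cases hadj : G.Adj u v
  · have : ¬(u ∈ s ∧ v ∈ s) := fun ⟨hu, hv⟩ ↦ hs hu hv (G.ne_of_adj hadj) hadj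
    grind
  · simp [hadj]

theorem IsIndepSet.card_mul_sub_le {d : ℕ} (hreg : G.IsRegularOfDegree d) {c : ℝ} (hc : c ≤ 0)
    (hspec : ∀ μ ∈ spectrum ℝ (G.adjMatrix ℝ), c ≤ μ) (hs : G.IsIndepSet s) :
    (s.card : ℝ) * (d - c) ≤ -c * Fintype.card V := by
  set f : V → ℝ := fun v ↦ if v ∈ s then 1 else 0
  set α : ℝ := (s.card : ℝ)
  set N : ℝ := (Fintype.card V : ℝ)
  have hf1 : f ⬝ᵥ 1 = α := by simp [f, α, dotProduct_one]
  have h1f : 1 ⬝ᵥ f = α := by rw [dotProduct_comm, hf1]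
  have hff : f ⬝ᵥ f = α := by simp [f, α, dotProduct]
  have hA1 : G.adjMatrix ℝ *ᵥ 1 = (d : ℝ) • 1 := by ext v; simp [hreg v]
  have h1Af : 1 ⬝ᵥ G.adjMatrix ℝ *ᵥ f = d * α := by
    rw [dotProduct_mulVec, ← mulVec_transpose, transpose_adjMatrix, hA1, smul_dotProduct, h1f,
      smul_eq_mul]
  have hfAf : f ⬝ᵥ G.adjMatrix ℝ *ᵥ f = 0 := hs.indicator_dotProduct_adjMatrix_mulVec
  have h11 : (1 : V → ℝ) ⬝ᵥ 1 = N := one_dotProduct_one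
  have key := (G.isHermitian_adjMatrix ℝ).smul_dotProduct_self_le hspec (N • f - α • 1)
  simp only [mulVec_sub, mulVec_smul, hA1, sub_dotProduct, dotProduct_sub, smul_dotProduct,
    dotProduct_smul, hff, hf1, h1f, h1Af, hfAf, h11, smul_eq_mul] at key
  have hmul : N * α * (α * d + c * (N - α)) ≤ 0 := by linear_combination key
  have hN : 0 ≤ N := Nat.cast_nonneg _
  have hαN : α ≤ N := Nat.cast_le.2 s.card_le_univ
  have hα0 : 0 ≤ α := Nat.cast_nonneg _
  rcases hα0.eq_or_lt with hα | hα
  · rw [← hα, zero_mul]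
    exact mul_nonneg (neg_nonneg.2 hc) hN
  · have hNα : 0 < N * α := mul_pos (hα.trans_le hαN) hα
    linarith [nonpos_of_mul_nonpos_right hmul hNα]

theorem IsIndepSet.card_le_div {d : ℕ} (hreg : G.IsRegularOfDegree d) {c : ℝ} (hc : c < 0)
    (hspec : ∀ μ ∈ spectrum ℝ (G.adjMatrix ℝ), c ≤ μ) (hs : G.IsIndepSet s) :
    (s.card : ℝ) ≤ Fintype.card V / (1 - d / c) := by
  have hd : (d : ℝ) / c ≤ 0 := div_nonpos_of_nonneg_of_nonpos d.cast_nonneg hc.le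
  rw [le_div_iff₀ (by linarith), one_sub_div hc.ne, mul_div_assoc', div_le_iff_of_neg hc]
  linarith [hs.card_mul_sub_le hreg hc.le hspec]

end SimpleGraph

theorem stmt1_general {V : Type*} [Fintype V] [DecidableEq V] (G : SimpleGraph V)
    [DecidableRel G.Adj] (d n : ℕ) (hn : n = Fintype.card V)
    (hreg : G.IsRegularOfDegree d)
    (lam : Fin n → ℝ) (hsort : Antitone lam)
    (hroots : (G.adjMatrix ℝ).charpoly.roots = Multiset.map lam Finset.univ.val)
    (hpos : 0 < n)
    (hneg : lam ⟨n - 1, Nat.sub_lt hpos Nat.one_pos⟩ < 0) :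
    (indepNum G : ℝ) ≤ (n : ℝ) /
      (1 - (d : ℝ) / lam ⟨n - 1, Nat.sub_lt hpos Nat.one_pos⟩) := by
  obtain ⟨s, hcard, hs⟩ := exists_card_eq_indepNum G
  have hspec :
      ∀ μ ∈ spectrum ℝ (G.adjMatrix ℝ), lam ⟨n - 1, Nat.sub_lt hpos Nat.one_pos⟩ ≤ μ := by
    intro μ hμ
    obtain ⟨i, rfl⟩ := spectrum_subset_range_of_roots_charpoly_eq hroots hμ
    exact hsort (Fin.mk_le_mk.2 (Nat.le_sub_one_of_lt i.isLt))
  have hbound := hs.card_le_div hreg hneg hspec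
  rwa [← hn, hcard] at hbound

/-- **Hoffman's ratio bound.** For a connected `d`-regular graph on `n` vertices with
adjacency eigenvalues `λ_1 = d ≥ ⋯ ≥ λ_n`, `λ_n < 0`, one has
`α(G) ≤ n / (1 − λ_1/λ_n)`. -/
theorem stmt1 {V : Type*} [Fintype V] [DecidableEq V] (G : SimpleGraph V)
    [DecidableRel G.Adj] (d n : ℕ) (hn : n = Fintype.card V)
    (hconn : G.Connected) (hreg : G.IsRegularOfDegree d)
    (lam : Fin n → ℝ) (hsort : Antitone lam)
    (hroots : (G.adjMatrix ℝ).charpoly.roots = Multiset.map lam Finset.univ.val)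
    (hpos : 0 < n)
    (h1 : lam ⟨0, hpos⟩ = (d : ℝ))
    (hneg : lam ⟨n - 1, Nat.sub_lt hpos Nat.one_pos⟩ < 0) :
    (indepNum G : ℝ) ≤ (n : ℝ) /
      (1 - (d : ℝ) / lam ⟨n - 1, Nat.sub_lt hpos Nat.one_pos⟩) :=
  stmt1_general G d n hn hreg lam hsort hroots hpos hneg
end

section
/- Let G be a graph with n vertices, adjacency matrix A and eigenvalues λ_1 ≥ ... ≥ λ_n. Let k ≥ 1 and let p be a real polynomial of degree at most k. Set W(p) = max_{u∈V} (p(A))_{uu} and w(p) = min_{u∈V} (p(A))_{uu}. Then the k-independence number satisfies α_k(G) ≤ min{ |{i : p(λ_i) ≥ w(p)}|, |{i : p(λ_i) ≤ W(p)}| }. -/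
/-!
If `p` has degree at most `k` and `s` is a `k`-independent set, then `p(A)` restricted to `s` is
diagonal, since `(A ^ j) u v` counts walks of length `j ≤ k < dist u v`. So the quadratic form of
`p(A)` is at least `w ‖x‖²` on the vectors supported on `s`, whereas it is smaller than `w ‖x‖²` on
every nonzero combination of eigenvectors of `A` with `p(λᵢ) < w`. These two subspaces meet
trivially, which gives `|s| ≤ #{i | w ≤ p(λᵢ)}`; the bound with `W` is the same one for `-p`.
-/

open Matrix Polynomial Module Finset Submodule Set
open scoped RealInnerProductSpace

noncomputable def kIndepNum {V : Type*} [Fintype V] (G : SimpleGraph V) (k : ℕ) : ℕ :=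
  sSup {r | ∃ s : Finset V, s.card = r ∧ ∀ u ∈ s, ∀ v ∈ s, u ≠ v → k < G.dist u v}

section Eigenbasis

variable {E ι : Type*} [NormedAddCommGroup E] [InnerProductSpace ℝ E] [Fintype ι]
  {T : E →ₗ[ℝ] E} {μ : ι → ℝ}

theorem OrthonormalBasis.inner_map_self_eq_sum (b : OrthonormalBasis ι ℝ E)
    (hb : ∀ i, T (b i) = μ i • b i) (x : E) :
    ⟪T x, x⟫ = ∑ i, μ i * ⟪b i, x⟫ ^ 2 := by
  nth_rw 1 [← b.sum_repr' x]
  simp only [map_sum, map_smul, hb, smul_smul, sum_inner, real_inner_smul_left]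
  exact Finset.sum_congr rfl fun i _ => by ring

theorem OrthonormalBasis.finrank_le_card_filter_le_of_le_inner (b : OrthonormalBasis ι ℝ E)
    (hb : ∀ i, T (b i) = μ i • b i) {U : Submodule ℝ E} {w : ℝ}
    (hU : ∀ x ∈ U, w * ‖x‖ ^ 2 ≤ ⟪T x, x⟫) :
    finrank ℝ U ≤ #{i | w ≤ μ i} := by
  classical
  let L : U →ₗ[ℝ] ({i // w ≤ μ i} → ℝ) :=
    LinearMap.pi fun i => (innerₛₗ ℝ (b i)).comp U.subtype
  have hL : Function.Injective L := by
    rw [← LinearMap.ker_eq_bot, LinearMap.ker_eq_bot']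
    rintro ⟨x, hx⟩ hLx
    have hzero : ∀ i, w ≤ μ i → ⟪b i, x⟫ = 0 := fun i hi => congr_fun hLx ⟨i, hi⟩
    have hnonneg : ∀ i, 0 ≤ (w - μ i) * ⟪b i, x⟫ ^ 2 := by
      intro i
      by_cases hi : w ≤ μ i
      · simp [hzero i hi]
      · exact mul_nonneg (by linarith) (sq_nonneg _)
    have hsum : ∑ i, (w - μ i) * ⟪b i, x⟫ ^ 2 = 0 := by
      refine le_antisymm ?_ (Finset.sum_nonneg fun i _ => hnonneg i)
      have := hU x hx
      rw [b.inner_map_self_eq_sum hb, ← b.sum_sq_inner_right x] at this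
      simp only [sub_mul, Finset.sum_sub_distrib, ← Finset.mul_sum]
      linarith
    have hcoord : ∀ i, ⟪b i, x⟫ = 0 := by
      intro i
      by_cases hi : w ≤ μ i
      · exact hzero i hi
      · have := (Finset.sum_eq_zero_iff_of_nonneg fun i _ => hnonneg i).1 hsum i (mem_univ i)
        exact pow_eq_zero_iff two_ne_zero |>.1 <|
          (mul_eq_zero.1 this).resolve_left (by linarith)
    ext
    simpa [hcoord] using (b.sum_repr' x).symm
  calc finrank ℝ U ≤ finrank ℝ ({i // w ≤ μ i} → ℝ) := LinearMap.finrank_le_finrank_of_injective hL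
    _ = #{i | w ≤ μ i} := by simp [Fintype.card_subtype]

theorem Orthonormal.le_inner_map_self_of_mem_span {κ : Type*} [Fintype κ] {e : κ → E}
    (he : Orthonormal ℝ e) {w : ℝ} (hdiag : ∀ j, w ≤ ⟪T (e j), e j⟫)
    (hoff : ∀ j l, j ≠ l → ⟪T (e j), e l⟫ = 0) {x : E} (hx : x ∈ span ℝ (range e)) :
    w * ‖x‖ ^ 2 ≤ ⟪T x, x⟫ := by
  classical
  obtain ⟨c, rfl⟩ := (mem_span_range_iff_exists_fun ℝ).1 hx
  have hT : ⟪T (∑ j, c j • e j), ∑ j, c j • e j⟫ = ∑ j, c j ^ 2 * ⟪T (e j), e j⟫ := by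
    simp only [map_sum, map_smul, sum_inner, inner_sum, real_inner_smul_left,
      real_inner_smul_right]
    refine Finset.sum_congr rfl fun j _ => ?_
    rw [Finset.sum_eq_single j (fun l _ hl => by rw [hoff l j hl]; ring) (by simp)]
    ring
  have hnorm : ‖∑ j, c j • e j‖ ^ 2 = ∑ j, c j ^ 2 := by
    rw [← real_inner_self_eq_norm_sq]
    simp only [sum_inner, inner_sum, real_inner_smul_left, real_inner_smul_right,
      orthonormal_iff_ite.1 he]
    simp [sq]
  rw [hT, hnorm, Finset.mul_sum]
  exact Finset.sum_le_sum fun j _ => by nlinarith [hdiag j, sq_nonneg (c j)]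

theorem OrthonormalBasis.card_le_card_filter_le_of_orthonormal (b : OrthonormalBasis ι ℝ E)
    (hb : ∀ i, T (b i) = μ i • b i) {κ : Type*} [Fintype κ] {e : κ → E}
    (he : Orthonormal ℝ e) {w : ℝ} (hdiag : ∀ j, w ≤ ⟪T (e j), e j⟫)
    (hoff : ∀ j l, j ≠ l → ⟪T (e j), e l⟫ = 0) :
    Fintype.card κ ≤ #{i | w ≤ μ i} :=
  calc Fintype.card κ = finrank ℝ (span ℝ (range e)) :=
        (finrank_span_eq_card he.linearIndependent).symm
    _ ≤ #{i | w ≤ μ i} := b.finrank_le_card_filter_le_of_le_inner hb fun _ hx =>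
        he.le_inner_map_self_of_mem_span hdiag hoff hx

end Eigenbasis

theorem Matrix.aeval_mulVec_of_mulVec_eq_smul {m R : Type*} [Fintype m] [DecidableEq m]
    [CommRing R] {A : Matrix m m R} {x : m → R} {μ : R} (h : A *ᵥ x = μ • x) (p : R[X]) :
    aeval A p *ᵥ x = p.eval μ • x := by
  have hpow : ∀ j : ℕ, A ^ j *ᵥ x = μ ^ j • x := by
    intro j
    induction j with
    | zero => simp
    | succ j ih => rw [pow_succ', ← mulVec_mulVec, ih, mulVec_smul, h, smul_smul, pow_succ]
  induction p using Polynomial.induction_on' with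
  | add p q hp hq => simp [add_mulVec, hp, hq, add_smul]
  | monomial j a =>
    rw [aeval_monomial, Algebra.algebraMap_eq_smul_one, smul_mul_assoc, one_mul, smul_mulVec,
      hpow, eval_monomial, smul_smul]

theorem SimpleGraph.adjMatrix_pow_apply_eq_zero_of_lt_dist {V α : Type*} [Fintype V]
    [DecidableEq V] [Semiring α] (G : SimpleGraph V) [DecidableRel G.Adj] {u v : V} {j : ℕ}
    (h : j < G.dist u v) : (G.adjMatrix α ^ j) u v = 0 := by
  rw [adjMatrix_pow_apply_eq_card_walk, Fintype.card_eq_zero_iff.2, Nat.cast_zero]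
  exact ⟨fun ⟨q, hq⟩ => (G.dist_le q).not_gt (hq ▸ h)⟩

theorem SimpleGraph.aeval_adjMatrix_apply_eq_zero_of_natDegree_lt_dist {V α : Type*} [Fintype V]
    [DecidableEq V] [CommSemiring α] (G : SimpleGraph V) [DecidableRel G.Adj] {u v : V}
    {p : α[X]} (h : p.natDegree < G.dist u v) : aeval (G.adjMatrix α) p u v = 0 := by
  rw [aeval_eq_sum_range, Matrix.sum_apply]
  refine Finset.sum_eq_zero fun j hj => ?_
  rw [Matrix.smul_apply, G.adjMatrix_pow_apply_eq_zero_of_lt_dist (by simp at hj; omega),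
    smul_zero]

theorem Finset.card_filter_univ_eq_of_map_eq {α β γ : Type*} [Fintype α] [Fintype β]
    {f : α → γ} {g : β → γ} (h : univ.val.map f = univ.val.map g) (P : γ → Prop)
    [DecidablePred P] : #{a | P (f a)} = #{b | P (g b)} := by
  have := congrArg (Multiset.countP P) h
  rwa [Multiset.countP_map, Multiset.countP_map] at this

theorem Matrix.IsHermitian.card_le_card_filter_le_eval_eigenvalues {m : Type*} [Fintype m]
    [DecidableEq m] {A : Matrix m m ℝ} (hA : A.IsHermitian) {p : ℝ[X]} {s : Finset m} {w : ℝ}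
    (hoff : ∀ u ∈ s, ∀ v ∈ s, u ≠ v → aeval A p u v = 0) (hdiag : ∀ u ∈ s, w ≤ aeval A p u u) :
    #s ≤ #{i | w ≤ p.eval (hA.eigenvalues i)} := by
  set M := aeval A p
  have hb : ∀ i, toEuclideanLin M (hA.eigenvectorBasis i) =
      p.eval (hA.eigenvalues i) • hA.eigenvectorBasis i := fun i =>
    WithLp.ofLp_injective 2 (aeval_mulVec_of_mulVec_eq_smul (hA.mulVec_eigenvectorBasis i) p)
  have hentry : ∀ u v, ⟪toEuclideanLin M (EuclideanSpace.single u 1), EuclideanSpace.single v 1⟫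
      = M v u := by
    intro u v
    simp [EuclideanSpace.inner_single_right]
  simpa using hA.eigenvectorBasis.card_le_card_filter_le_of_orthonormal hb
    (e := fun u : s => EuclideanSpace.single (u : m) (1 : ℝ))
    (EuclideanSpace.orthonormal_single.comp _ Subtype.val_injective)
    (fun u => (hentry u u).symm ▸ hdiag u u.2)
    (fun u v huv => (hentry u v).trans (hoff v v.2 u u.2 (Subtype.coe_ne_coe.2 huv.symm)))

theorem stmt2_general {V : Type*} [Fintype V] [DecidableEq V] (G : SimpleGraph V)
    [DecidableRel G.Adj] (n k : ℕ)
    (lam : Fin n → ℝ)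
    (hroots : (G.adjMatrix ℝ).charpoly.roots = Multiset.map lam Finset.univ.val)
    (p : Polynomial ℝ) (hdeg : p.natDegree ≤ k)
    (W w : ℝ)
    (hW : IsGreatest (Set.range fun u : V => (Polynomial.aeval (G.adjMatrix ℝ) p) u u) W)
    (hw : IsLeast (Set.range fun u : V => (Polynomial.aeval (G.adjMatrix ℝ) p) u u) w) :
    kIndepNum G k ≤ min {i : Fin n | w ≤ p.eval (lam i)}.ncard
      {i : Fin n | p.eval (lam i) ≤ W}.ncard := by
  have hA := G.isHermitian_adjMatrix ℝ
  have hspec : univ.val.map hA.eigenvalues = univ.val.map lam := by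
    simpa [hA.roots_charpoly_eq_eigenvalues] using hroots
  refine csSup_le ⟨0, ∅, by simp⟩ ?_
  rintro _ ⟨s, rfl, hs⟩
  have hoff : ∀ q : ℝ[X], q.natDegree ≤ k →
      ∀ u ∈ s, ∀ v ∈ s, u ≠ v → aeval (G.adjMatrix ℝ) q u v = 0 :=
    fun q hq u hu v hv huv =>
      G.aeval_adjMatrix_apply_eq_zero_of_natDegree_lt_dist (hq.trans_lt (hs u hu v hv huv))
  refine le_min ?_ ?_
  · calc #s ≤ #{i | w ≤ p.eval (hA.eigenvalues i)} :=
          hA.card_le_card_filter_le_eval_eigenvalues (hoff p hdeg) fun u _ => hw.2 ⟨u, rfl⟩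
      _ = {i : Fin n | w ≤ p.eval (lam i)}.ncard := by
          rw [card_filter_univ_eq_of_map_eq hspec (fun x => w ≤ p.eval x), ← Set.ncard_coe_finset]
          simp
  · calc #s ≤ #{i | -W ≤ (-p).eval (hA.eigenvalues i)} :=
          hA.card_le_card_filter_le_eval_eigenvalues (hoff (-p) (by rwa [natDegree_neg]))
            fun u _ => by simpa using hW.2 ⟨u, rfl⟩
      _ = {i : Fin n | p.eval (lam i) ≤ W}.ncard := by
          rw [card_filter_univ_eq_of_map_eq hspec (fun x => -W ≤ (-p).eval x),
            ← Set.ncard_coe_finset]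
          simp

/-- **Inertia-type bound for the k-independence number** (Abiad–Coutinho–Fiol).
If `p` has degree at most `k`, `W = max_u (p(A))_{uu}` and `w = min_u (p(A))_{uu}`, then
`α_k(G) ≤ min{ #{i : p(λ_i) ≥ w}, #{i : p(λ_i) ≤ W} }`. -/
theorem stmt2 {V : Type*} [Fintype V] [DecidableEq V] (G : SimpleGraph V)
    [DecidableRel G.Adj] (n k : ℕ) (hn : n = Fintype.card V) (hk : 1 ≤ k)
    (lam : Fin n → ℝ) (hsort : Antitone lam)
    (hroots : (G.adjMatrix ℝ).charpoly.roots = Multiset.map lam Finset.univ.val)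
    (p : Polynomial ℝ) (hdeg : p.natDegree ≤ k)
    (W w : ℝ)
    (hW : IsGreatest (Set.range fun u : V => (Polynomial.aeval (G.adjMatrix ℝ) p) u u) W)
    (hw : IsLeast (Set.range fun u : V => (Polynomial.aeval (G.adjMatrix ℝ) p) u u) w) :
    kIndepNum G k ≤ min {i : Fin n | w ≤ p.eval (lam i)}.ncard
      {i : Fin n | p.eval (lam i) ≤ W}.ncard :=
  stmt2_general G n k lam hroots p hdeg W w hW hw
end

section
/- Let G be a connected regular graph with n vertices, adjacency matrix A and eigenvalues λ_1 ≥ ... ≥ λ_n. Let p be a real polynomial of degree at most k with λ(p) := min_{2 ≤ i ≤ n} p(λ_i) < p(λ_1), and let W(p) = max_{u∈V} (p(A))_{uu}. Then α_k(G) ≤ n · (W(p) − λ(p)) / (p(λ_1) − λ(p)). -/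
/-!
Let `A` be the adjacency matrix of the `d`-regular graph `G` and `M = p(A)`. Since `λ(p)`
bounds `p` from below on the spectrum of `A`, the matrix `M - λ(p) I` is positive semidefinite,
and the all-ones vector is an eigenvector of `M` for `p(d) = p(λ₁)`. Testing positivity on
`n 1_S - |S| 1`, where `S` is a maximum `k`-independent set, gives
`|S|² (p(λ₁) - λ(p)) ≤ n (1_Sᵀ M 1_S - λ(p) |S|)`. As `deg p ≤ k`, `M` vanishes between
vertices at distance greater than `k`, so `1_Sᵀ M 1_S` is the sum of the diagonal entries of
`M` over `S`, which is at most `|S| W(p)`.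
-/

open Matrix Polynomial

lemma exists_card_eq_kIndepNum {V : Type*} [Fintype V] (G : SimpleGraph V) (k : ℕ) :
    ∃ s : Finset V, s.card = kIndepNum G k ∧
      ∀ u ∈ s, ∀ v ∈ s, u ≠ v → k < G.dist u v :=
  Nat.sSup_mem (s := {r | ∃ s : Finset V, s.card = r ∧
      ∀ u ∈ s, ∀ v ∈ s, u ≠ v → k < G.dist u v})
    ⟨0, ∅, by simp⟩ ⟨Fintype.card V, by rintro _ ⟨s, rfl, -⟩; exact s.card_le_univ⟩

section

variable {V : Type*} [Fintype V]

lemma Matrix.PosSemidef.sq_sum_mul_le {N : Matrix V V ℝ} (hN : N.PosSemidef) {μ : ℝ}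
    (hone : N *ᵥ 1 = μ • 1) (x : V → ℝ) :
    (∑ i, x i) ^ 2 * μ ≤ Fintype.card V * (x ⬝ᵥ N *ᵥ x) := by
  set n : ℝ := (Fintype.card V : ℝ)
  set s := ∑ i, x i
  have hxN1 : x ⬝ᵥ N *ᵥ 1 = μ * s := by
    rw [hone, dotProduct_smul, dotProduct_one, smul_eq_mul]
  have h1Nx : 1 ⬝ᵥ N *ᵥ x = μ * s := by
    have hT : Nᵀ = N := by simpa using hN.isHermitian.eq
    rw [dotProduct_mulVec, ← mulVec_transpose, hT, hone, smul_dotProduct, one_dotProduct,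
      smul_eq_mul]
  have h11 : 1 ⬝ᵥ N *ᵥ 1 = μ * n := by
    rw [hone, dotProduct_smul, one_dotProduct_one, smul_eq_mul]
  have hquad : 0 ≤ n * (n * (x ⬝ᵥ N *ᵥ x) - s ^ 2 * μ) := by
    have := hN.dotProduct_mulVec_nonneg (n • x - s • 1)
    simp only [star_trivial, mulVec_sub, mulVec_smul, dotProduct_sub, sub_dotProduct,
      dotProduct_smul, smul_dotProduct, smul_eq_mul, hxN1, h1Nx, h11] at this
    linarith
  rcases (Nat.cast_nonneg (Fintype.card V) : (0 : ℝ) ≤ n).eq_or_lt with hn | hn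
  · have : IsEmpty V := Fintype.card_eq_zero_iff.mp (by exact_mod_cast hn.symm)
    simp [s]
  · nlinarith

lemma SimpleGraph.adjMatrix_mulVec_one_of_regular {G : SimpleGraph V} [DecidableRel G.Adj] {d : ℕ}
    (hreg : G.IsRegularOfDegree d) : G.adjMatrix ℝ *ᵥ 1 = (d : ℝ) • 1 := by
  ext v
  simp [hreg v]

variable [DecidableEq V]

open scoped MatrixOrder in
lemma Matrix.IsHermitian.posSemidef_aeval_sub_smul_one {A : Matrix V V ℝ} (hA : A.IsHermitian)
    (p : ℝ[X]) {c : ℝ} (hc : ∀ x ∈ spectrum ℝ A, c ≤ p.eval x) :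
    (aeval A p - c • 1).PosSemidef := by
  have h : aeval A p - c • 1 = aeval A (p - C c) := by
    rw [map_sub, aeval_C, Algebra.algebraMap_eq_smul_one]
  rw [h, ← cfc_polynomial (p - C c) A hA, ← Matrix.nonneg_iff_posSemidef]
  exact cfc_nonneg fun x hx => by simpa using hc x hx

lemma Matrix.aeval_mulVec_of_mulVec_eq_smul_s3 {A : Matrix V V ℝ} {μ : ℝ} {v : V → ℝ}
    (hv : A *ᵥ v = μ • v) (p : ℝ[X]) : aeval A p *ᵥ v = p.eval μ • v := by
  have := Module.End.aeval_apply_of_mem_apply_eq_smul (f := Matrix.toLinAlgEquiv' A) (p := p)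
    (x := v) (by simpa [Matrix.toLinAlgEquiv'_apply] using hv)
  rwa [aeval_algHom_apply, Matrix.toLinAlgEquiv'_apply] at this

lemma Matrix.indicator_dotProduct_mulVec_indicator (N : Matrix V V ℝ) (S : Finset V) :
    (fun v => if v ∈ S then (1 : ℝ) else 0) ⬝ᵥ N *ᵥ (fun v => if v ∈ S then 1 else 0) =
      ∑ u ∈ S, ∑ v ∈ S, N u v := by
  simp [dotProduct, mulVec, ite_mul, mul_ite, Finset.sum_ite_mem]

lemma Matrix.card_mul_sub_le_of_posSemidef {M : Matrix V V ℝ} {c θ W : ℝ}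
    (hM : (M - c • 1).PosSemidef) (hone : M *ᵥ 1 = θ • 1) (hW : ∀ u, M u u ≤ W)
    (S : Finset V) (hS : ∀ u ∈ S, ∀ v ∈ S, u ≠ v → M u v = 0) :
    S.card * (θ - c) ≤ Fintype.card V * (W - c) := by
  have hone' : (M - c • 1) *ᵥ 1 = (θ - c) • 1 := by
    rw [sub_mulVec, hone, smul_mulVec, one_mulVec, sub_smul]
  have hquad := hM.sq_sum_mul_le hone' (fun v => if v ∈ S then 1 else 0)
  rw [indicator_dotProduct_mulVec_indicator, Finset.sum_boole, Finset.filter_mem_eq_inter,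
    Finset.univ_inter] at hquad
  have hdiag : ∑ u ∈ S, ∑ v ∈ S, (M - c • 1) u v ≤ S.card * (W - c) := by
    calc ∑ u ∈ S, ∑ v ∈ S, (M - c • 1) u v = ∑ u ∈ S, (M u u - c) := by
          refine Finset.sum_congr rfl fun u hu => ?_
          rw [Finset.sum_eq_single_of_mem u hu fun v hv hvu => by
            simp [hS u hu v hv hvu.symm, one_apply_ne hvu.symm]]
          simp
      _ ≤ ∑ _u ∈ S, (W - c) := Finset.sum_le_sum fun u _ => by linarith [hW u]
      _ = S.card * (W - c) := by rw [Finset.sum_const, nsmul_eq_mul]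
  rcases isEmpty_or_nonempty V with hV | ⟨⟨u⟩⟩
  · simp [Finset.eq_empty_of_isEmpty S]
  have hcW : c ≤ W := by
    have := hM.diag_nonneg (i := u)
    simp only [sub_apply, smul_apply, one_apply_eq, smul_eq_mul, mul_one] at this
    linarith [hW u]
  rcases (Nat.cast_nonneg S.card : (0 : ℝ) ≤ S.card).eq_or_lt with hs | hs
  · rw [← hs, zero_mul]
    exact mul_nonneg (Nat.cast_nonneg _) (sub_nonneg.mpr hcW)
  · nlinarith

namespace SimpleGraph

variable {G : SimpleGraph V} [DecidableRel G.Adj] {d : ℕ}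

lemma natCast_mem_spectrum_adjMatrix_of_regular [Nonempty V] (hreg : G.IsRegularOfDegree d) :
    (d : ℝ) ∈ spectrum ℝ (G.adjMatrix ℝ) := by
  rw [← Matrix.spectrum_toLin', ← Module.End.hasEigenvalue_iff_mem_spectrum]
  refine Module.End.hasEigenvalue_of_hasEigenvector (x := 1) ⟨?_, one_ne_zero⟩
  simpa [Module.End.mem_eigenspace_iff] using adjMatrix_mulVec_one_of_regular hreg

/-- By Gershgorin's theorem: every disc is centred at `0` and has radius `d`. -/
lemma le_of_mem_spectrum_adjMatrix_of_regular (hreg : G.IsRegularOfDegree d) {μ : ℝ}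
    (hμ : μ ∈ spectrum ℝ (G.adjMatrix ℝ)) : μ ≤ d := by
  rw [← Matrix.spectrum_toLin', ← Module.End.hasEigenvalue_iff_mem_spectrum] at hμ
  obtain ⟨u, hu⟩ := eigenvalue_mem_ball hμ
  have hrow : ∑ v ∈ Finset.univ.erase u, ‖G.adjMatrix ℝ u v‖ = d := by
    rw [Finset.sum_erase _ (by simp)]
    simpa [adjMatrix_apply, apply_ite, ← neighborFinset_eq_filter] using hreg u
  rw [hrow, Metric.mem_closedBall, Real.dist_eq] at hu
  simpa using (le_abs_self _).trans hu

lemma aeval_adjMatrix_apply_eq_zero_of_natDegree_lt_dist_s3 {p : ℝ[X]} {u v : V}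
    (hp : p.natDegree < G.dist u v) : aeval (G.adjMatrix ℝ) p u v = 0 := by
  rw [aeval_eq_sum_range, Matrix.sum_apply]
  refine Finset.sum_eq_zero fun i hi => ?_
  have hwalk : IsEmpty {w : G.Walk u v | w.length = i} :=
    ⟨fun ⟨w, (hw : w.length = i)⟩ => by
      have := G.dist_le w
      rw [Finset.mem_range] at hi
      omega⟩
  simp [adjMatrix_pow_apply_eq_card_walk, Fintype.card_eq_zero]

end SimpleGraph

end

theorem stmt3_general {V : Type*} [Fintype V] [DecidableEq V] (G : SimpleGraph V)
    [DecidableRel G.Adj] (n k d : ℕ) (hn : n = Fintype.card V)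
    (hreg : G.IsRegularOfDegree d)
    (lam : Fin n → ℝ) (hsort : Antitone lam)
    (hroots : (G.adjMatrix ℝ).charpoly.roots = Multiset.map lam Finset.univ.val)
    (hpos : 0 < n)
    (p : Polynomial ℝ) (hdeg : p.natDegree ≤ k)
    (lamp : ℝ)
    (hlamp : IsLeast {y : ℝ | ∃ i : Fin n, i ≠ ⟨0, hpos⟩ ∧ y = p.eval (lam i)} lamp)
    (hlt : lamp < p.eval (lam ⟨0, hpos⟩))
    (W : ℝ)
    (hW : IsGreatest (Set.range fun u : V => (Polynomial.aeval (G.adjMatrix ℝ) p) u u) W) :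
    (kIndepNum G k : ℝ) ≤ (n : ℝ) * (W - lamp) / (p.eval (lam ⟨0, hpos⟩) - lamp) := by
  have : Nonempty V := Fintype.card_pos_iff.mp (hn ▸ hpos)
  have hspectrum : ∀ x, x ∈ spectrum ℝ (G.adjMatrix ℝ) ↔ ∃ i, lam i = x := fun x => by
    rw [mem_spectrum_iff_isRoot_charpoly, ← mem_roots (charpoly_monic _).ne_zero, hroots]
    simp
  have hlam0 : lam ⟨0, hpos⟩ = d := by
    obtain ⟨i, hi⟩ := (hspectrum d).mp (G.natCast_mem_spectrum_adjMatrix_of_regular hreg)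
    exact le_antisymm
      (G.le_of_mem_spectrum_adjMatrix_of_regular hreg ((hspectrum _).mpr ⟨_, rfl⟩))
      (hi ▸ hsort (show (⟨0, hpos⟩ : Fin n) ≤ i from Nat.zero_le _))
  have hlamp_le : ∀ x ∈ spectrum ℝ (G.adjMatrix ℝ), lamp ≤ p.eval x := by
    rintro x hx
    obtain ⟨i, rfl⟩ := (hspectrum x).mp hx
    by_cases hi : i = ⟨0, hpos⟩
    · exact hi ▸ hlt.le
    · exact hlamp.2 ⟨i, hi, rfl⟩
  obtain ⟨S, hS, hSdist⟩ := exists_card_eq_kIndepNum G k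
  have hratio := card_mul_sub_le_of_posSemidef
    ((G.isHermitian_adjMatrix (R := ℝ)).posSemidef_aeval_sub_smul_one p hlamp_le)
    (aeval_mulVec_of_mulVec_eq_smul_s3 (G.adjMatrix_mulVec_one_of_regular hreg) p)
    (fun u => hW.2 ⟨u, rfl⟩) S
    fun u hu v hv huv => G.aeval_adjMatrix_apply_eq_zero_of_natDegree_lt_dist_s3
      (hdeg.trans_lt (hSdist u hu v hv huv))
  rw [le_div_iff₀ (sub_pos.mpr hlt), ← hS, hlam0]
  exact hn ▸ hratio

/-- **Ratio-type bound for the k-independence number** (Abiad–Coutinho–Fiol).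
For a connected regular graph, a polynomial `p` of degree at most `k` with
`λ(p) = min_{2 ≤ i ≤ n} p(λ_i) < p(λ_1)` and `W = max_u (p(A))_{uu}`, one has
`α_k(G) ≤ n (W − λ(p)) / (p(λ_1) − λ(p))`. -/
theorem stmt3 {V : Type*} [Fintype V] [DecidableEq V] (G : SimpleGraph V)
    [DecidableRel G.Adj] (n k d : ℕ) (hn : n = Fintype.card V)
    (hconn : G.Connected) (hreg : G.IsRegularOfDegree d)
    (lam : Fin n → ℝ) (hsort : Antitone lam)
    (hroots : (G.adjMatrix ℝ).charpoly.roots = Multiset.map lam Finset.univ.val)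
    (hpos : 0 < n)
    (p : Polynomial ℝ) (hdeg : p.natDegree ≤ k)
    (lamp : ℝ)
    (hlamp : IsLeast {y : ℝ | ∃ i : Fin n, i ≠ ⟨0, hpos⟩ ∧ y = p.eval (lam i)} lamp)
    (hlt : lamp < p.eval (lam ⟨0, hpos⟩))
    (W : ℝ)
    (hW : IsGreatest (Set.range fun u : V => (Polynomial.aeval (G.adjMatrix ℝ) p) u u) W) :
    (kIndepNum G k : ℝ) ≤ (n : ℝ) * (W - lamp) / (p.eval (lam ⟨0, hpos⟩) - lamp) :=
  stmt3_general G n k d hn hreg lam hsort hroots hpos p hdeg lamp hlamp hlt W hW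
end

section
/- For the Kneser graph K(n,k) with n > 2k ≥ 2, the independence number equals C(n−1,k−1). -/
/-- The Kneser graph `K(n,k)`: vertices are the `k`-subsets of an `n`-set,
two vertices being adjacent iff the corresponding subsets are disjoint. -/
def kneserGraph (n k : ℕ) : SimpleGraph {s : Finset (Fin n) // s.card = k} where
  Adj a b := Disjoint (a : Finset (Fin n)) (b : Finset (Fin n)) ∧ a ≠ b
  symm := ⟨fun a b h => ⟨h.1.symm, h.2.symm⟩⟩
  loopless := ⟨fun a h => h.2 rfl⟩

/-! Independent sets of `K(n,k)` are intersecting families of `k`-sets, so Erdős–Ko–Rado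
bounds the independence number by `C(n-1,k-1)`; the star of a point attains it. -/

open Finset

theorem indepNum_eq_simpleGraph_indepNum {V : Type*} [Fintype V] (G : SimpleGraph V) :
    indepNum G = G.indepNum := by
  unfold indepNum SimpleGraph.indepNum
  simp only [SimpleGraph.isNIndepSet_iff, and_comm]
  rfl

namespace kneserGraph

variable {n k : ℕ}

theorem intersecting_of_isIndepSet (hk : 0 < k) {s : Finset {s : Finset (Fin n) // s.card = k}}
    (hs : (kneserGraph n k).IsIndepSet s) :
    (s.map (Function.Embedding.subtype _) : Set (Finset (Fin n))).Intersecting := by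
  simp only [coe_map, Function.Embedding.coe_subtype]
  rintro _ ⟨a, ha, rfl⟩ _ ⟨b, hb, rfl⟩ hab
  obtain rfl | hne := eq_or_ne a b
  · rw [disjoint_self_iff_empty, ← card_eq_zero, a.2] at hab
    omega
  · exact hs ha hb hne ⟨hab, hne⟩

theorem indepNum_le (hk : 0 < k) (hn : 2 * k ≤ n) :
    (kneserGraph n k).indepNum ≤ (n - 1).choose (k - 1) := by
  obtain ⟨s, hs⟩ := (kneserGraph n k).exists_isNIndepSet_indepNum
  rw [← hs.card_eq, ← card_map (Function.Embedding.subtype _)]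
  refine erdos_ko_rado (intersecting_of_isIndepSet hk hs.isIndepSet) ?_ (by omega)
  simp only [coe_map, Function.Embedding.coe_subtype]
  rintro _ ⟨a, -, rfl⟩
  exact a.2

def star (k : ℕ) (a : Fin n) : Finset {s : Finset (Fin n) // s.card = k} :=
  univ.filter fun v => a ∈ v.1

theorem isIndepSet_star (a : Fin n) : (kneserGraph n k).IsIndepSet (star k a : Set _) := by
  intro u hu v hv _ huv
  simp only [star, coe_filter, mem_univ, true_and, Set.mem_ofPred_eq] at hu hv
  exact disjoint_left.1 huv.1 hu hv

theorem card_star (hk : 0 < k) (a : Fin n) : #(star k a) = (n - 1).choose (k - 1) := by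
  have : (star k a).map (Function.Embedding.subtype _) =
      (univ.powersetCard k).filter ({a} ⊆ ·) := by
    ext s
    simp [star, and_comm]
  rw [← card_map, this, card_filter_powersetCard_subset _ _ _ (subset_univ _) (by simpa),
    card_univ, Fintype.card_fin, card_singleton]

end kneserGraph

/-- **Erdős–Ko–Rado:** for `n > 2k ≥ 2`, the independence number of the Kneser graph
`K(n,k)` equals `C(n−1, k−1)`. -/
theorem stmt11 (n k : ℕ) (hk : 1 ≤ k) (hn : 2 * k < n) :
    indepNum (kneserGraph n k) = (n - 1).choose (k - 1) := by
  rw [indepNum_eq_simpleGraph_indepNum]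
  refine le_antisymm (kneserGraph.indepNum_le hk hn.le) ?_
  let a : Fin n := ⟨0, by omega⟩
  calc (n - 1).choose (k - 1) = #(kneserGraph.star k a) := (kneserGraph.card_star hk a).symm
    _ ≤ (kneserGraph n k).indepNum := (kneserGraph.isIndepSet_star a).card_le_indepNum
end

section
/- Let G be a walk-regular graph on n vertices with d+1 distinct eigenvalues θ_0 > θ_1 > ... > θ_d (multiplicities m_0 = 1, m_1, ..., m_d) and diameter D = d. Let π_i = Π_{j ≠ i} |θ_i − θ_j|. Then for every even index 2i with 1 ≤ 2i ≤ d such that m_{2i} ≠ π_0/π_{2i}, the (d−1)-independence number satisfies α_{d−1}(G) ≤ m_{2i}. -/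
open Matrix Polynomial

/-!
Let `A` be the adjacency matrix, `n = |V|`, and for each `l` let
`q_l = ∏_{j ≠ l} (X - θ_j)`, so that `q_l(A) = q_l(θ_l) E_l` with `E_l` the spectral
idempotent of `θ_l` and `q_l(θ_l) = (-1)^l π_l`. Each `q_l` is monic of degree `d = D`, so all
the `q_l(A)` agree with `A^d` on pairs of vertices at distance `d`. Walk-regularity makes `G`
regular, so `θ_0` is the degree and `q_0(A) = π_0 J / n`: the common value is `c = π_0 / n`.
For even `i`, `q_i(A)` is positive semidefinite of rank `m_i`, with constant diagonal
`a = π_i m_i / n` by walk-regularity. Positive semidefiniteness forces `c ≤ a`, and the hypothesis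
`m_i ≠ π_0 / π_i` makes this strict; the principal submatrix of `q_i(A)` on a set of vertices
pairwise at distance `d` is then `(a - c) I + c J`, which is positive definite, so the set has at
most `m_i` elements.
-/

open Finset Lagrange

lemma kIndepNum_le {V : Type*} [Fintype V] {G : SimpleGraph V} {k r : ℕ}
    (h : ∀ s : Finset V, (∀ u ∈ s, ∀ v ∈ s, u ≠ v → k < G.dist u v) → s.card ≤ r) :
    kIndepNum G k ≤ r :=
  csSup_le ⟨0, ∅, by simp⟩ fun _ ⟨s, hs, hsep⟩ => hs ▸ h s hsep

lemma prod_erase_abs_sub_pos {ι : Type*} [Fintype ι] [DecidableEq ι] {θ : ι → ℝ}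
    (hθ : Function.Injective θ) (i : ι) : 0 < ∏ j ∈ univ.erase i, |θ i - θ j| :=
  prod_pos fun _ hj => abs_pos.mpr (sub_ne_zero.mpr (hθ.ne (ne_of_mem_erase hj).symm))

lemma StrictAnti.eval_nodal_erase_of_even {d : ℕ} {θ : Fin (d + 1) → ℝ} (hθ : StrictAnti θ)
    {i : Fin (d + 1)} (hi : Even (i : ℕ)) :
    (nodal (univ.erase i) θ).eval (θ i) = ∏ j ∈ univ.erase i, |θ i - θ j| := by
  have hsign : ∀ j ∈ univ.erase i, θ i - θ j = (if j < i then -1 else 1) * |θ i - θ j| := by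
    intro j hj
    rcases (ne_of_mem_erase hj).lt_or_gt with hji | hij
    · rw [if_pos hji, abs_of_neg (sub_neg.mpr (hθ hji))]; ring
    · rw [if_neg hij.not_gt, abs_of_pos (sub_pos.mpr (hθ hij)), one_mul]
  have hlt : {j ∈ univ.erase i | j < i} = Iio i := by
    ext j
    simpa using fun h : j < i => h.ne
  rw [eval_nodal, prod_congr rfl hsign, prod_mul_distrib, prod_ite, prod_const, prod_const,
    one_pow, mul_one, hlt, Fin.card_Iio, hi.neg_one_pow, one_mul]

namespace Matrix

variable {n : Type*} [Fintype n] [DecidableEq n]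

lemma aeval_mulVec_of_mulVec_eq_smul_s12 {R : Type*} [CommRing R] {A : Matrix n n R} {x : n → R}
    {t : R} (hx : A *ᵥ x = t • x) (p : R[X]) : aeval A p *ᵥ x = p.eval t • x := by
  have hpow : ∀ k : ℕ, (A ^ k) *ᵥ x = t ^ k • x := fun k => by
    induction k with
    | zero => simp
    | succ k ih => rw [pow_succ, ← mulVec_mulVec, hx, mulVec_smul, ih, smul_smul, pow_succ']
  induction p using Polynomial.induction_on' with
  | add p q hp hq => simp [add_mulVec, hp, hq, add_smul]
  | monomial k a =>
    simp [aeval_monomial, Algebra.algebraMap_eq_smul_one, smul_mulVec, hpow, smul_smul]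

lemma PosSemidef.two_mul_apply_le {M : Matrix n n ℝ} (hM : M.PosSemidef) (u v : n) :
    2 * M u v ≤ M u u + M v v := by
  have hsymm : M v u = M u v := by simpa using (congrFun (congrFun hM.isHermitian v) u).symm
  have h := hM.dotProduct_mulVec_nonneg (Pi.single u 1 - Pi.single v 1)
  simp only [star_trivial, mulVec_sub, mulVec_single, MulOpposite.op_one, one_smul,
    dotProduct_sub, sub_dotProduct, single_dotProduct, col_apply, one_mul, hsymm, sub_nonneg,
    tsub_le_iff_right] at h
  linarith

lemma PosSemidef.apply_eq_of_diag_eq_of_sum_eq {M : Matrix n n ℝ} (hM : M.PosSemidef) {c : ℝ}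
    (hdiag : ∀ u, M u u = c) (hsum : ∀ u, ∑ v, M u v = Fintype.card n * c) (u v : n) :
    M u v = c := by
  have hle : ∀ w, M u w ≤ c := fun w => by linarith [hM.two_mul_apply_le u w, hdiag u, hdiag w]
  have hsum' : ∑ w, M u w = ∑ _w : n, c := by simp [hsum]
  exact (sum_eq_sum_iff_of_le fun w _ => hle w).mp hsum' v (mem_univ v)

lemma card_le_rank_of_apply_eq (M : Matrix n n ℝ) (s : Finset n) {a c : ℝ} (hc : 0 ≤ c)
    (hca : c < a) (hdiag : ∀ u ∈ s, M u u = a) (hoff : ∀ u ∈ s, ∀ v ∈ s, u ≠ v → M u v = c) :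
    s.card ≤ M.rank := by
  set B := M.submatrix ((↑) : s → n) ((↑) : s → n)
  have hB : B = (a - c) • (1 : Matrix s s ℝ) + c • vecMulVec 1 (star 1) := by
    ext u v
    by_cases huv : u = v
    · subst huv; simp [B, hdiag u u.2]
    · simp [B, huv, hoff u u.2 v v.2 (Subtype.coe_ne_coe.mpr huv)]
  have hBpos : B.PosDef := hB ▸ ((PosDef.one.smul (sub_pos.mpr hca)).add_posSemidef
    ((posSemidef_vecMulVec_self_star 1).smul hc))
  calc s.card = B.rank := by rw [rank_of_isUnit B hBpos.isUnit, Fintype.card_coe]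
    _ ≤ M.rank := rank_submatrix_le M _ _

namespace IsHermitian

variable {A : Matrix n n ℝ} (hA : A.IsHermitian)

lemma aeval_eq_conj_diagonal (p : ℝ[X]) :
    aeval A p = (hA.eigenvectorUnitary : Matrix n n ℝ) *
      diagonal (fun i => p.eval (hA.eigenvalues i)) *
        star (hA.eigenvectorUnitary : Matrix n n ℝ) := by
  rw [← cfc_polynomial p A hA.isSelfAdjoint, hA.cfc_eq, IsHermitian.cfc,
    Unitary.conjStarAlgAut_apply]
  rfl

lemma trace_aeval (p : ℝ[X]) : (aeval A p).trace = ∑ i, p.eval (hA.eigenvalues i) := by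
  rw [hA.aeval_eq_conj_diagonal, trace_mul_cycle, Unitary.coe_star_mul_self, one_mul,
    trace_diagonal]

lemma rank_aeval (p : ℝ[X]) :
    (aeval A p).rank = Fintype.card {i // p.eval (hA.eigenvalues i) ≠ 0} := by
  set U := hA.eigenvectorUnitary
  rw [hA.aeval_eq_conj_diagonal, ← rank_diagonal, ← Unitary.coe_star,
    rank_mul_eq_left_of_isUnit_det _ _ (UnitaryGroup.det_isUnit (star U)),
    rank_mul_eq_right_of_isUnit_det _ _ (UnitaryGroup.det_isUnit U)]

lemma posSemidef_aeval {p : ℝ[X]} (hp : ∀ i, 0 ≤ p.eval (hA.eigenvalues i)) :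
    (aeval A p).PosSemidef := by
  rw [hA.aeval_eq_conj_diagonal, star_eq_conjTranspose]
  exact (posSemidef_diagonal_iff.mpr hp).mul_mul_conjTranspose_same _

variable {ι : Type*} [Fintype ι] {θ : ι → ℝ} {m : ι → ℕ}

lemma map_eigenvalues_eq
    (hroots : A.charpoly.roots = univ.val.bind fun j => Multiset.replicate (m j) (θ j)) :
    univ.val.map hA.eigenvalues = univ.val.bind fun j => Multiset.replicate (m j) (θ j) := by
  simpa [hA.roots_charpoly_eq_eigenvalues] using hroots

lemma exists_eigenvalues_eq
    (hroots : A.charpoly.roots = univ.val.bind fun j => Multiset.replicate (m j) (θ j)) (i : n) :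
    ∃ j, hA.eigenvalues i = θ j := by
  have hi : hA.eigenvalues i ∈ univ.val.map hA.eigenvalues := by simp
  rw [hA.map_eigenvalues_eq hroots] at hi
  obtain ⟨j, -, hj⟩ := Multiset.mem_bind.mp hi
  exact ⟨j, Multiset.eq_of_mem_replicate hj⟩

variable [DecidableEq ι]

lemma card_eigenvalues_eq (hθ : Function.Injective θ)
    (hroots : A.charpoly.roots = univ.val.bind fun j => Multiset.replicate (m j) (θ j)) (j : ι) :
    #{i | hA.eigenvalues i = θ j} = m j := by
  have hcount := congrArg (Multiset.count (θ j)) (hA.map_eigenvalues_eq hroots)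
  rw [Multiset.count_map, Multiset.count_bind] at hcount
  simp only [Multiset.count_replicate, hθ.eq_iff] at hcount
  rw [← sum_eq_multiset_sum, sum_ite_eq', if_pos (mem_univ j)] at hcount
  rw [← hcount, card_def, filter_val]
  simp only [eq_comm]

lemma eval_nodal_erase_eigenvalues (hθ : Function.Injective θ)
    (hroots : A.charpoly.roots = univ.val.bind fun j => Multiset.replicate (m j) (θ j))
    (l : ι) (i : n) :
    (nodal (univ.erase l) θ).eval (hA.eigenvalues i) =
      if hA.eigenvalues i = θ l then (nodal (univ.erase l) θ).eval (θ l) else 0 := by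
  obtain ⟨j, hj⟩ := hA.exists_eigenvalues_eq hroots i
  rw [hj]
  by_cases hjl : j = l
  · simp [hjl]
  · rw [if_neg (hθ.ne hjl), eval_nodal_at_node (mem_erase.mpr ⟨hjl, mem_univ j⟩)]

lemma trace_aeval_nodal_erase (hA : A.IsHermitian) (hθ : Function.Injective θ)
    (hroots : A.charpoly.roots = univ.val.bind fun j => Multiset.replicate (m j) (θ j))
    (l : ι) :
    (aeval A (nodal (univ.erase l) θ)).trace = (nodal (univ.erase l) θ).eval (θ l) * m l := by
  rw [hA.trace_aeval, sum_congr rfl fun i _ => hA.eval_nodal_erase_eigenvalues hθ hroots l i,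
    ← sum_filter, sum_const, hA.card_eigenvalues_eq hθ hroots, nsmul_eq_mul, mul_comm]

lemma rank_aeval_nodal_erase_le (hA : A.IsHermitian) (hθ : Function.Injective θ)
    (hroots : A.charpoly.roots = univ.val.bind fun j => Multiset.replicate (m j) (θ j))
    (l : ι) : (aeval A (nodal (univ.erase l) θ)).rank ≤ m l := by
  rw [hA.rank_aeval, ← hA.card_eigenvalues_eq hθ hroots l, Fintype.card_subtype]
  refine card_le_card fun i => ?_
  simp only [mem_filter, mem_univ, true_and, hA.eval_nodal_erase_eigenvalues hθ hroots]
  exact fun h => by_contra fun h' => h (if_neg h')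

lemma posSemidef_aeval_nodal_erase (hA : A.IsHermitian) (hθ : Function.Injective θ)
    (hroots : A.charpoly.roots = univ.val.bind fun j => Multiset.replicate (m j) (θ j))
    {l : ι} (hl : 0 ≤ (nodal (univ.erase l) θ).eval (θ l)) :
    (aeval A (nodal (univ.erase l) θ)).PosSemidef :=
  hA.posSemidef_aeval fun i => by
    rw [hA.eval_nodal_erase_eigenvalues hθ hroots]
    split_ifs
    exacts [hl, le_rfl]

end IsHermitian

end Matrix

namespace SimpleGraph

variable {V : Type*} [Fintype V] [DecidableEq V] (G : SimpleGraph V) [DecidableRel G.Adj]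

lemma adjMatrix_pow_apply_eq_zero_of_lt_dist_s12 {R : Type*} [Semiring R] {k : ℕ} {u v : V}
    (hk : k < G.dist u v) : (G.adjMatrix R ^ k) u v = 0 := by
  rw [adjMatrix_pow_apply_eq_card_walk, Fintype.card_eq_zero_iff.mpr, Nat.cast_zero]
  exact ⟨fun w => hk.not_ge (w.2 ▸ dist_le w.1)⟩

lemma aeval_adjMatrix_apply_of_natDegree_eq_dist {R : Type*} [CommSemiring R] {p : R[X]}
    (hp : p.Monic) {u v : V} (hdeg : p.natDegree = G.dist u v) :
    aeval (G.adjMatrix R) p u v = (G.adjMatrix R ^ G.dist u v) u v := by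
  rw [aeval_eq_sum_range, Matrix.sum_apply, hdeg, sum_range_succ,
    sum_eq_zero fun k hk => by
      rw [Matrix.smul_apply, G.adjMatrix_pow_apply_eq_zero_of_lt_dist_s12 (mem_range.mp hk),
        smul_zero],
    zero_add, Matrix.smul_apply, ← hdeg, hp.coeff_natDegree, one_smul]

def IsWalkRegular : Prop :=
  ∀ p : ℝ[X], ∀ u v : V, aeval (G.adjMatrix ℝ) p u u = aeval (G.adjMatrix ℝ) p v v

variable {G}

lemma IsRegularOfDegree.abs_le_of_hasEigenvalue {k : ℕ} (hG : G.IsRegularOfDegree k) {t : ℝ}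
    (ht : Module.End.HasEigenvalue (toLin' (G.adjMatrix ℝ)) t) : |t| ≤ k := by
  obtain ⟨u, hu⟩ := eigenvalue_mem_ball ht
  have hnbr : {v ∈ univ.erase u | G.Adj u v} = G.neighborFinset u := by
    ext v
    simpa using fun h : G.Adj u v => h.ne'
  simpa [apply_ite, hnbr, hG.degree_eq u] using hu

lemma IsWalkRegular.isRegularOfDegree (hG : G.IsWalkRegular) (u : V) :
    G.IsRegularOfDegree (G.degree u) := fun v => by
  have := hG (X ^ 2) v u
  rw [map_pow, aeval_X, sq, adjMatrix_mul_self_apply_self, adjMatrix_mul_self_apply_self] at this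
  exact_mod_cast this

lemma IsWalkRegular.aeval_apply_self (hG : G.IsWalkRegular) (p : ℝ[X]) (u : V) :
    aeval (G.adjMatrix ℝ) p u u = (aeval (G.adjMatrix ℝ) p).trace / Fintype.card V := by
  have : (Fintype.card V : ℝ) ≠ 0 := Nat.cast_ne_zero.mpr (Fintype.card_pos_iff.mpr ⟨u⟩).ne'
  simp [trace, hG p _ u, this]

variable {d : ℕ} {θ : Fin (d + 1) → ℝ} {m : Fin (d + 1) → ℕ}

lemma IsWalkRegular.aeval_nodal_erase_apply_self (hG : G.IsWalkRegular)
    (hθ : Function.Injective θ) (hroots : (G.adjMatrix ℝ).charpoly.roots =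
      univ.val.bind fun j => Multiset.replicate (m j) (θ j)) (l : Fin (d + 1)) (u : V) :
    aeval (G.adjMatrix ℝ) (nodal (univ.erase l) θ) u u =
      (nodal (univ.erase l) θ).eval (θ l) * m l / Fintype.card V := by
  rw [hG.aeval_apply_self, (G.isHermitian_adjMatrix ℝ).trace_aeval_nodal_erase hθ hroots]

lemma IsRegularOfDegree.eq_eigenvalue_zero {k : ℕ} (hG : G.IsRegularOfDegree k)
    (hθ : StrictAnti θ) (hroots : (G.adjMatrix ℝ).charpoly.roots =
      univ.val.bind fun j => Multiset.replicate (m j) (θ j)) (hm0 : m 0 ≠ 0) :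
    (k : ℝ) = θ 0 := by
  have hA := G.isHermitian_adjMatrix ℝ
  have heig : ∀ t, Module.End.HasEigenvalue (toLin' (G.adjMatrix ℝ)) t ↔
      t ∈ Set.range hA.eigenvalues := fun t => by
    rw [Module.End.hasEigenvalue_iff_mem_spectrum, spectrum_toLin',
      hA.spectrum_real_eq_range_eigenvalues]
  obtain ⟨v₀, hv₀⟩ : ∃ v, hA.eigenvalues v = θ 0 := by
    have := hA.card_eigenvalues_eq hθ.injective hroots 0
    obtain ⟨v, hv⟩ := card_pos.mp (this ▸ Nat.pos_of_ne_zero hm0)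
    exact ⟨v, (mem_filter.mp hv).2⟩
  have hk : Module.End.HasEigenvalue (toLin' (G.adjMatrix ℝ)) k := by
    refine Module.End.hasEigenvalue_of_hasEigenvector (x := fun _ => 1) ⟨?_, ?_⟩
    · rw [Module.End.mem_eigenspace_iff, toLin'_apply]
      ext v
      simp [hG.degree_eq]
    · exact fun h => one_ne_zero (congrFun h v₀)
  obtain ⟨v, hv⟩ := (heig k).mp hk
  obtain ⟨j, hj⟩ := hA.exists_eigenvalues_eq hroots v
  have hθ0 := hG.abs_le_of_hasEigenvalue ((heig _).mpr ⟨v₀, hv₀⟩)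
  rw [← hv, hj] at hθ0
  have hj0 : j = 0 := nonpos_iff_eq_zero.mp (hθ.le_iff_ge.mp ((le_abs_self _).trans hθ0))
  rw [← hv, hj, hj0]

lemma IsWalkRegular.aeval_nodal_erase_zero_apply (hG : G.IsWalkRegular) (hθ : StrictAnti θ)
    (hroots : (G.adjMatrix ℝ).charpoly.roots =
      univ.val.bind fun j => Multiset.replicate (m j) (θ j)) (hm0 : m 0 = 1) (u v : V) :
    aeval (G.adjMatrix ℝ) (nodal (univ.erase 0) θ) u v =
      (nodal (univ.erase 0) θ).eval (θ 0) / Fintype.card V := by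
  set π₀ := (nodal (univ.erase 0) θ).eval (θ 0)
  have hn : (Fintype.card V : ℝ) ≠ 0 := Nat.cast_ne_zero.mpr (Fintype.card_pos_iff.mpr ⟨u⟩).ne'
  have hπ₀ : 0 < π₀ := by
    rw [show π₀ = _ from hθ.eval_nodal_erase_of_even (i := 0) (by simp)]
    exact prod_erase_abs_sub_pos hθ.injective 0
  have hdiag (w : V) :
      aeval (G.adjMatrix ℝ) (nodal (univ.erase 0) θ) w w = π₀ / Fintype.card V := by
    rw [hG.aeval_nodal_erase_apply_self hθ.injective hroots, hm0, Nat.cast_one, mul_one]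
  have hk := (hG.isRegularOfDegree u).eq_eigenvalue_zero hθ hroots (by simp [hm0])
  have hones : G.adjMatrix ℝ *ᵥ (fun _ => 1) = θ 0 • fun _ => 1 := by
    ext w
    simp [(hG.isRegularOfDegree u).degree_eq w, hk]
  have hsum (w : V) : ∑ x, aeval (G.adjMatrix ℝ) (nodal (univ.erase 0) θ) w x =
      Fintype.card V * (π₀ / Fintype.card V) := by
    have := congrFun (aeval_mulVec_of_mulVec_eq_smul_s12 hones (nodal (univ.erase 0) θ)) w
    simpa [mulVec, dotProduct, mul_div_cancel₀ _ hn] using this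
  exact ((G.isHermitian_adjMatrix ℝ).posSemidef_aeval_nodal_erase hθ.injective hroots
    hπ₀.le).apply_eq_of_diag_eq_of_sum_eq hdiag hsum u v

lemma IsWalkRegular.aeval_nodal_erase_apply_of_dist_eq (hG : G.IsWalkRegular)
    (hθ : StrictAnti θ) (hroots : (G.adjMatrix ℝ).charpoly.roots =
      univ.val.bind fun j => Multiset.replicate (m j) (θ j)) (hm0 : m 0 = 1) (l : Fin (d + 1))
    {u v : V} (huv : G.dist u v = d) :
    aeval (G.adjMatrix ℝ) (nodal (univ.erase l) θ) u v =
      (nodal (univ.erase 0) θ).eval (θ 0) / Fintype.card V := by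
  have hdeg : ∀ l : Fin (d + 1), (nodal (univ.erase l) θ).natDegree = G.dist u v := fun l => by
    simp [natDegree_nodal, huv]
  rw [G.aeval_adjMatrix_apply_of_natDegree_eq_dist nodal_monic (hdeg l),
    ← G.aeval_adjMatrix_apply_of_natDegree_eq_dist nodal_monic (hdeg 0),
    hG.aeval_nodal_erase_zero_apply hθ hroots hm0]

end SimpleGraph

theorem stmt12_general {V : Type*} [Fintype V] [DecidableEq V] (G : SimpleGraph V)
    [DecidableRel G.Adj] (d : ℕ)
    (θ : Fin (d + 1) → ℝ) (hθ : StrictAnti θ) (m : Fin (d + 1) → ℕ) (hm0 : m 0 = 1)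
    (hroots : (G.adjMatrix ℝ).charpoly.roots =
      Finset.univ.val.bind fun i => Multiset.replicate (m i) (θ i))
    (hwr : ∀ p : Polynomial ℝ, ∀ u v : V,
      (Polynomial.aeval (G.adjMatrix ℝ) p) u u = (Polynomial.aeval (G.adjMatrix ℝ) p) v v)
    (hdiam : (∀ u v : V, G.dist u v ≤ d) ∧ ∃ u v : V, G.dist u v = d) :
    ∀ i : Fin (d + 1), Even (i : ℕ) → 1 ≤ (i : ℕ) →
      (m i : ℝ) ≠ (∏ j ∈ Finset.univ.erase (0 : Fin (d + 1)), |θ 0 - θ j|) /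
        (∏ j ∈ Finset.univ.erase i, |θ i - θ j|) →
      kIndepNum G (d - 1) ≤ m i := by
  intro i hi _ hm
  have hA := G.isHermitian_adjMatrix ℝ
  have hG : G.IsWalkRegular := hwr
  have hπ₀ := hθ.eval_nodal_erase_of_even (i := 0) (by simp)
  have hπᵢ := hθ.eval_nodal_erase_of_even hi
  have hpsd := hA.posSemidef_aeval_nodal_erase hθ.injective hroots
    (hπᵢ ▸ prod_erase_abs_sub_pos hθ.injective i).le
  have hdiag := hG.aeval_nodal_erase_apply_self hθ.injective hroots i
  have hoff (u v : V) := hG.aeval_nodal_erase_apply_of_dist_eq (u := u) (v := v) hθ hroots hm0 i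
  obtain ⟨u₀, v₀, huv₀⟩ := hdiam.2
  have hn : (Fintype.card V : ℝ) ≠ 0 := Nat.cast_ne_zero.mpr (Fintype.card_pos_iff.mpr ⟨u₀⟩).ne'
  have hc : 0 ≤ (nodal (univ.erase 0) θ).eval (θ 0) / Fintype.card V :=
    div_nonneg (hπ₀ ▸ prod_nonneg fun _ _ => abs_nonneg _) (Nat.cast_nonneg _)
  have hca : (nodal (univ.erase 0) θ).eval (θ 0) / Fintype.card V <
      (nodal (univ.erase i) θ).eval (θ i) * m i / Fintype.card V := by
    refine lt_of_le_of_ne ?_ fun h => hm ?_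
    · linarith [hpsd.two_mul_apply_le u₀ v₀, hoff u₀ v₀ huv₀, hdiag u₀, hdiag v₀]
    · rw [← hπ₀, ← hπᵢ, eq_div_iff (hπᵢ ▸ prod_erase_abs_sub_pos hθ.injective i).ne', mul_comm]
      exact ((div_left_inj' hn).mp h).symm
  refine kIndepNum_le fun s hs => ?_
  calc s.card ≤ (aeval (G.adjMatrix ℝ) (nodal (univ.erase i) θ)).rank :=
        card_le_rank_of_apply_eq _ s hc hca (fun u _ => hdiag u)
          fun u hu v hv huv => hoff u v (by have := hs u hu v hv huv; have := hdiam.1 u v; omega)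
    _ ≤ m i := hA.rank_aeval_nodal_erase_le hθ.injective hroots i

/-- **Theorem (inertia bound, even indices).** Let `G` be walk-regular with `d+1`
distinct eigenvalues `θ_0 > ⋯ > θ_d` (multiplicities `m_0 = 1, m_1, …, m_d`) and
diameter `D = d`, and let `π_i = Π_{j ≠ i} |θ_i − θ_j|`. Then for every even index
`2i` with `1 ≤ 2i ≤ d` such that `m_{2i} ≠ π_0/π_{2i}`, one has `α_{d−1}(G) ≤ m_{2i}`. -/
theorem stmt12 {V : Type*} [Fintype V] [DecidableEq V] (G : SimpleGraph V)
    [DecidableRel G.Adj] (d : ℕ) (hd : 1 ≤ d)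
    (θ : Fin (d + 1) → ℝ) (hθ : StrictAnti θ) (m : Fin (d + 1) → ℕ) (hm0 : m 0 = 1)
    (hroots : (G.adjMatrix ℝ).charpoly.roots =
      Finset.univ.val.bind fun i => Multiset.replicate (m i) (θ i))
    (hwr : ∀ p : Polynomial ℝ, ∀ u v : V,
      (Polynomial.aeval (G.adjMatrix ℝ) p) u u = (Polynomial.aeval (G.adjMatrix ℝ) p) v v)
    (hdiam : (∀ u v : V, G.dist u v ≤ d) ∧ ∃ u v : V, G.dist u v = d) :
    ∀ i : Fin (d + 1), Even (i : ℕ) → 1 ≤ (i : ℕ) →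
      (m i : ℝ) ≠ (∏ j ∈ Finset.univ.erase (0 : Fin (d + 1)), |θ 0 - θ j|) /
        (∏ j ∈ Finset.univ.erase i, |θ i - θ j|) →
      kIndepNum G (d - 1) ≤ m i :=
  stmt12_general G d θ hθ m hm0 hroots hwr hdiam
end

section
/- Suppose r ≥ 2 and θ_0 > ... > θ_d are distinct reals with π_i = Π_{j≠i}|θ_i − θ_j|, and and define m_i = π_0/π_i for even i and m_i = (r−1)π_0/π_i for odd i. Then n := Σ_{i=0}^d m_i = (r/2)·Σ_{i=0}^d π_0/π_i, and Σ_{i=0}^d π_0²/(m_i π_i²) = n/(r−1). -/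
/-!
Since `θ` is decreasing, `∏_{j≠i} (θ_i - θ_j) = (-1)^i π_i`, and `∑_i 1 / ∏_{j≠i} (θ_i - θ_j)`
is the coefficient of `X^d` in the Lagrange interpolant of the constant `1` at `d + 1 ≥ 2`
nodes, hence `0`. So `∑ (-1)^i π_0/π_i = 0`: the even and odd parts of `∑ π_0/π_i` agree.
Writing a weight `u` on even and `v` on odd indices as `(u+v)/2 + (-1)^i (u-v)/2`, the
weighted sum is then `(u+v)/2 · ∑ π_0/π_i`; take `(u, v) = (1, r-1)` for `n` and
`(1, 1/(r-1))` for `∑ π_0²/(m_i π_i²)`.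
-/

open Finset

theorem Lagrange.sum_inv_prod_erase_sub_eq_zero {F ι : Type*} [Field F] [DecidableEq ι]
    {s : Finset ι} {v : ι → F} (hvs : Set.InjOn v s) (hs : 2 ≤ #s) :
    ∑ i ∈ s, (∏ j ∈ s.erase i, (v i - v j))⁻¹ = 0 := by
  have h := Lagrange.coeff_eq_sum hvs (P := 1) (by
    rw [Polynomial.degree_one]; exact_mod_cast (by omega : 0 < #s))
  rw [Polynomial.coeff_one, if_neg (by omega)] at h
  simpa [one_div] using h.symm

theorem prod_erase_sub_eq_neg_one_pow_mul_prod_abs {R : Type*} [CommRing R] [LinearOrder R]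
    [IsStrictOrderedRing R] {n : ℕ} {θ : Fin n → R} (hθ : StrictAnti θ) (i : Fin n) :
    ∏ j ∈ univ.erase i, (θ i - θ j) = (-1) ^ (i : ℕ) * ∏ j ∈ univ.erase i, |θ i - θ j| := by
  have hsign : ∀ j ∈ univ.erase i, θ i - θ j = (if j < i then -1 else 1) * |θ i - θ j| := by
    intro j hj
    rcases lt_or_gt_of_ne (mem_erase.mp hj).1 with h | h
    · rw [if_pos h, abs_of_neg (sub_neg.mpr (hθ h)), neg_one_mul, neg_neg]
    · rw [if_neg h.not_gt, abs_of_pos (sub_pos.mpr (hθ h)), one_mul]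
  have hcard : #((univ.erase i).filter (· < i)) = i := by
    rw [show (univ.erase i).filter (· < i) = Iio i by ext j; simp [lt_iff_le_and_ne],
      Fin.card_Iio]
  rw [prod_congr rfl hsign, prod_mul_distrib, prod_ite, prod_const, prod_const_one, mul_one,
    hcard]

theorem sum_neg_one_pow_div_prod_abs_eq_zero {K : Type*} [Field K] [LinearOrder K]
    [IsStrictOrderedRing K] {n : ℕ} (hn : 2 ≤ n) {θ : Fin n → K} (hθ : StrictAnti θ) :
    ∑ i : Fin n, (-1) ^ (i : ℕ) / ∏ j ∈ univ.erase i, |θ i - θ j| = 0 := by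
  rw [← Lagrange.sum_inv_prod_erase_sub_eq_zero (s := univ) hθ.injective.injOn
    (by simpa using hn)]
  refine sum_congr rfl fun i _ => ?_
  rw [prod_erase_sub_eq_neg_one_pow_mul_prod_abs hθ, mul_inv, ← inv_pow, inv_neg, inv_one,
    div_eq_mul_inv]

theorem two_mul_sum_ite_even_mul {R ι : Type*} [CommRing R] (s : Finset ι) (k : ι → ℕ)
    (a : ι → R) (u v : R) (h : ∑ i ∈ s, (-1) ^ k i * a i = 0) :
    2 * ∑ i ∈ s, (if Even (k i) then u else v) * a i = (u + v) * ∑ i ∈ s, a i := by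
  have hsplit : ∀ i, 2 * ((if Even (k i) then u else v) * a i)
      = (u + v) * a i + (u - v) * ((-1) ^ k i * a i) := by
    intro i
    rcases Nat.even_or_odd (k i) with hk | hk
    · rw [if_pos hk, hk.neg_one_pow]; ring
    · rw [if_neg (Nat.not_even_iff_odd.mpr hk), hk.neg_one_pow]; ring
  rw [mul_sum, sum_congr rfl fun i _ => hsplit i, sum_add_distrib, ← mul_sum, ← mul_sum, h,
    mul_zero, add_zero]

/-- **Computations in the proof of Proposition 5.** For `r ≥ 2` and distinct reals
`θ_0 > ⋯ > θ_d` with `π_i = Π_{j≠i}|θ_i − θ_j|`, setting `m_i = π_0/π_i` for even `i`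
and `m_i = (r−1)π_0/π_i` for odd `i`, one has
`n := Σ m_i = (r/2)·Σ π_0/π_i` and `Σ π_0²/(m_i π_i²) = n/(r−1)`. -/
theorem stmt15 (d : ℕ) (hd : 1 ≤ d) (θ : Fin (d + 1) → ℝ) (hθ : StrictAnti θ)
    (r : ℝ) (hr : 2 ≤ r)
    (π : Fin (d + 1) → ℝ)
    (hπ : ∀ i, π i = ∏ j ∈ Finset.univ.erase i, |θ i - θ j|)
    (m : Fin (d + 1) → ℝ)
    (hm : ∀ i, m i = if Even (i : ℕ) then π 0 / π i else (r - 1) * π 0 / π i)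
    (n : ℝ) (hn : n = ∑ i : Fin (d + 1), m i) :
    n = (r / 2) * ∑ i : Fin (d + 1), π 0 / π i ∧
    ∑ i : Fin (d + 1), (π 0) ^ 2 / (m i * (π i) ^ 2) = n / (r - 1) := by
  have hπ_ne : ∀ i, π i ≠ 0 := fun i => by
    rw [hπ i]
    exact prod_ne_zero_iff.mpr fun j hj =>
      abs_ne_zero.mpr (sub_ne_zero.mpr (hθ.injective.ne (mem_erase.mp hj).1.symm))
  have hr1 : r - 1 ≠ 0 := by linarith
  have halt : ∑ i : Fin (d + 1), (-1) ^ (i : ℕ) * (π 0 / π i) = 0 := by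
    have h := sum_neg_one_pow_div_prod_abs_eq_zero (by omega : 2 ≤ d + 1) hθ
    simp_rw [← hπ] at h
    calc ∑ i : Fin (d + 1), (-1) ^ (i : ℕ) * (π 0 / π i)
        = π 0 * ∑ i : Fin (d + 1), (-1) ^ (i : ℕ) / π i := by
          rw [mul_sum]; congr 1 with i; ring
      _ = 0 := by rw [h, mul_zero]
  have hn2 : 2 * n = r * ∑ i, π 0 / π i := by
    have h := two_mul_sum_ite_even_mul _ _ _ 1 (r - 1) halt
    rw [add_sub_cancel] at h
    rw [hn, ← h]
    congr 2 with i
    rw [hm i]; split_ifs <;> ring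
  have hrecip : 2 * ∑ i, π 0 ^ 2 / (m i * π i ^ 2) = (1 + (r - 1)⁻¹) * ∑ i, π 0 / π i := by
    rw [← two_mul_sum_ite_even_mul _ _ _ 1 (r - 1)⁻¹ halt]
    congr 2 with i
    rw [hm i]; split_ifs <;> field_simp [hπ_ne i, hπ_ne 0]
  constructor
  · linarith
  · field_simp at hrecip
    rw [eq_div_iff hr1]
    linear_combination (hrecip - hn2) / 2
end

section
/- Let G be a connected regular graph on n vertices whose adjacency matrix A has a principal r×r submatrix equal to the zero matrix (i.e., an independent set of size r), and let λ_1 > λ_in ≥ λ_n be as usual with λ_n < 0. Then via eigenvalue interlacing of the 2×2 quotient matrix of the partition {independent set, rest}, one obtains r ≤ n·(−λ_n)/(λ_1 − λ_n). -/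
/-!
Hoffman's ratio bound via the Rayleigh quotient. For an independent set `s` of size `r` in a
`κ`-regular graph on `n` vertices, the test vector `x = n • 𝟙_s - r • 𝟙` is orthogonal to the
all-ones eigenvector, and regularity together with `𝟙_sᵀ A 𝟙_s = 0` gives
`xᵀ x = n r (n - r)` and `xᵀ A x = -n κ r²`. Comparing with `λ_n · xᵀ x ≤ xᵀ A x` yields
`r (κ - λ_n) ≤ n (-λ_n)`.
-/

open Matrix Finset
open scoped ComplexOrder Pointwise

namespace Matrix.IsHermitian

variable {𝕜 n : Type*} [RCLike 𝕜] [Fintype n] [DecidableEq n] {A : Matrix n n 𝕜}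

theorem posSemidef_sub_algebraMap_of_le_eigenvalues (hA : A.IsHermitian) {c : ℝ}
    (hc : ∀ i, c ≤ hA.eigenvalues i) : (A - algebraMap ℝ (Matrix n n 𝕜) c).PosSemidef := by
  have hB : (A - algebraMap ℝ (Matrix n n 𝕜) c).IsHermitian :=
    hA.sub (IsSelfAdjoint.algebraMap _ (IsSelfAdjoint.all c))
  refine hB.posSemidef_iff_eigenvalues_nonneg.mpr fun i => ?_
  have hi : hB.eigenvalues i ∈ spectrum ℝ A - ({c} : Set ℝ) := by
    rw [spectrum.sub_singleton_eq, hB.spectrum_real_eq_range_eigenvalues]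
    exact ⟨i, rfl⟩
  obtain ⟨_, ⟨j, rfl⟩, _, rfl, hj⟩ := hA.spectrum_real_eq_range_eigenvalues ▸ hi
  simpa [← hj] using hc j

theorem mul_star_dotProduct_le_of_le_eigenvalues (hA : A.IsHermitian) {c : ℝ}
    (hc : ∀ i, c ≤ hA.eigenvalues i) (x : n → 𝕜) : (c : 𝕜) * (star x ⬝ᵥ x) ≤ star x ⬝ᵥ A *ᵥ x := by
  have := (hA.posSemidef_sub_algebraMap_of_le_eigenvalues hc).dotProduct_mulVec_nonneg x
  rwa [sub_mulVec, dotProduct_sub, Algebra.algebraMap_eq_smul_one, smul_mulVec, one_mulVec,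
    dotProduct_smul, sub_nonneg, RCLike.real_smul_eq_coe_mul] at this

end Matrix.IsHermitian

namespace SimpleGraph

variable {V α : Type*} [Fintype V] {G : SimpleGraph V} [DecidableRel G.Adj]

theorem IsIndepSet.indicator_dotProduct_adjMatrix_mulVec_indicator [DecidableEq V]
    [NonAssocSemiring α] {s : Finset V} (hs : G.IsIndepSet s) :
    (fun v => if v ∈ s then (1 : α) else 0) ⬝ᵥ
      G.adjMatrix α *ᵥ (fun v => if v ∈ s then 1 else 0) = 0 := by
  rw [dotProduct_mulVec_adjMatrix]
  refine sum_eq_zero fun u _ => sum_eq_zero fun v _ => ?_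
  by_cases hu : u ∈ s <;> by_cases hv : v ∈ s <;> simp [hu, hv]
  exact fun h => (hs hu hv h.ne h).elim

theorem IsRegularOfDegree.adjMatrix_mulVec_one [NonAssocSemiring α] {κ : ℕ}
    (hG : G.IsRegularOfDegree κ) : G.adjMatrix α *ᵥ 1 = (κ : α) • 1 := by
  ext v
  simp [hG v]

theorem IsRegularOfDegree.one_dotProduct_adjMatrix_mulVec [CommSemiring α] {κ : ℕ}
    (hG : G.IsRegularOfDegree κ) (x : V → α) : 1 ⬝ᵥ G.adjMatrix α *ᵥ x = κ * (1 ⬝ᵥ x) := by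
  rw [dotProduct_mulVec, ← mulVec_transpose, transpose_adjMatrix, hG.adjMatrix_mulVec_one,
    smul_dotProduct, smul_eq_mul]

theorem IsRegularOfDegree.card_mul_sub_le_of_isIndepSet [DecidableEq V] {κ : ℕ}
    (hG : G.IsRegularOfDegree κ) (hA : (G.adjMatrix ℝ).IsHermitian) {c : ℝ}
    (hc : ∀ i, c ≤ hA.eigenvalues i) {s : Finset V} (hs : G.IsIndepSet s) (hne : s.Nonempty) :
    (#s : ℝ) * (κ - c) ≤ Fintype.card V * (-c) := by
  set χ : V → ℝ := fun v => if v ∈ s then 1 else 0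
  set N : ℝ := (Fintype.card V : ℝ)
  set r : ℝ := (#s : ℝ)
  have hχχ : χ ⬝ᵥ χ = r := by simp [χ, dotProduct, r]
  have hχ1 : χ ⬝ᵥ 1 = r := by simp [χ, dotProduct, r]
  have h11 : (1 : V → ℝ) ⬝ᵥ 1 = N := by simp [dotProduct, N]
  have hχAχ : χ ⬝ᵥ G.adjMatrix ℝ *ᵥ χ = 0 := hs.indicator_dotProduct_adjMatrix_mulVec_indicator
  have hray := hA.mul_star_dotProduct_le_of_le_eigenvalues hc (N • χ - r • 1)
  simp only [star_trivial, sub_dotProduct, dotProduct_sub, smul_dotProduct, dotProduct_smul,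
    mulVec_sub, mulVec_smul, hG.adjMatrix_mulVec_one, hG.one_dotProduct_adjMatrix_mulVec,
    hχχ, hχ1, dotProduct_comm 1 χ, h11, hχAχ, smul_eq_mul, RCLike.ofReal_real_eq_id, id] at hray
  have hN : 0 < N := by simpa [N] using hne.card_pos.trans_le (card_le_univ s)
  have hr : 0 < r := by simpa [r] using hne.card_pos
  have key : N * r * (c * (N - r) + κ * r) ≤ 0 := by linear_combination hray
  linarith [nonpos_of_mul_nonpos_right key (mul_pos hN hr)]

end SimpleGraph

theorem stmt19_general {V : Type*} [Fintype V] [DecidableEq V] (G : SimpleGraph V)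
    [DecidableRel G.Adj] (κ n r : ℕ) (hn : n = Fintype.card V)
    (hreg : G.IsRegularOfDegree κ)
    (s : Finset V) (hcard : s.card = r)
    (hindep : ∀ u ∈ s, ∀ v ∈ s, u ≠ v → ¬ G.Adj u v)
    (hA : (G.adjMatrix ℝ).IsHermitian)
    (lamn : ℝ) (hlamn : IsLeast (Set.range hA.eigenvalues) lamn)
    (hneg : lamn < 0) :
    (r : ℝ) ≤ (n : ℝ) * (-lamn) / ((κ : ℝ) - lamn) := by
  subst hn hcard
  have hgap : 0 < (κ : ℝ) - lamn := by linarith [(κ.cast_nonneg : (0 : ℝ) ≤ κ)]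
  rcases s.eq_empty_or_nonempty with rfl | hne
  · rw [card_empty, Nat.cast_zero]
    exact div_nonneg (mul_nonneg (Nat.cast_nonneg _) (neg_nonneg.2 hneg.le)) hgap.le
  rw [le_div_iff₀ hgap]
  exact hreg.card_mul_sub_le_of_isIndepSet hA (fun i => hlamn.2 ⟨i, rfl⟩) hindep hne

/-- **Ratio bound via quotient-matrix interlacing.** Let `G` be a connected `κ`-regular
graph on `n` vertices whose adjacency matrix has a principal `r × r` zero submatrix
(an independent set of size `r`), and let `λ_n < 0` be the least adjacency eigenvalue.
Then `r ≤ n·(−λ_n)/(λ_1 − λ_n)` with `λ_1 = κ`. -/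
theorem stmt19 {V : Type*} [Fintype V] [DecidableEq V] (G : SimpleGraph V)
    [DecidableRel G.Adj] (κ n r : ℕ) (hn : n = Fintype.card V)
    (hconn : G.Connected) (hreg : G.IsRegularOfDegree κ)
    (s : Finset V) (hcard : s.card = r)
    (hindep : ∀ u ∈ s, ∀ v ∈ s, u ≠ v → ¬ G.Adj u v)
    (hA : (G.adjMatrix ℝ).IsHermitian)
    (lamn : ℝ) (hlamn : IsLeast (Set.range hA.eigenvalues) lamn)
    (hneg : lamn < 0) :
    (r : ℝ) ≤ (n : ℝ) * (-lamn) / ((κ : ℝ) - lamn) :=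
  stmt19_general G κ n r hn hreg s hcard hindep hA lamn hlamn hneg
end
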